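/- For a positive integer t, the sum over all strict partitions ξ of t of (2^{(t-ℓ(ξ))/2} · |Std(ξ)|)² equals t!, where ℓ(ξ) is the number of parts of ξ and Std(ξ) is the set of standard shifted tableaux of shape ξ. -/

import Mathlib

/-- A multipartition-like shape: `comps` components, each either strict
(shifted diagram) or an ordinary partition diagram.  A box is a triple
`(l, i, j)`: component `l`, row `i`, column `j` (all 0-indexed). -/
structure MultiShape where
  comps : ℕ
  isStrict : ℕ → Bool
  part : ℕ → ℕ → ℕ

namespace MultiShape

/-- The set of boxes of the diagram of the shape.  In a strict component the
`i`-th row is shifted `i` steps to the right. -/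
def cells (Λ : MultiShape) : Set (ℕ × ℕ × ℕ) :=
  {b | b.1 < Λ.comps ∧
    (if Λ.isStrict b.1 then
        b.2.1 ≤ b.2.2 ∧ b.2.2 < b.2.1 + Λ.part b.1 b.2.1
      else b.2.2 < Λ.part b.1 b.2.1)}

/-- `p : ℕ → ℕ` is a strict partition: weakly decreasing and strictly
decreasing on nonzero parts. -/
def IsStrictPartFun (p : ℕ → ℕ) : Prop :=
  Antitone p ∧ ∀ i, p (i + 1) ≠ 0 → p (i + 1) < p i

/-- Well-formedness of a shape: strict components are strict partitions,
ordinary components are partitions, and everything beyond `comps` is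
normalized to zero. -/
def WellFormed (Λ : MultiShape) : Prop :=
  (∀ l < Λ.comps, Λ.isStrict l = true → IsStrictPartFun (Λ.part l)) ∧
  (∀ l < Λ.comps, Λ.isStrict l = false → Antitone (Λ.part l)) ∧
  (∀ l, Λ.comps ≤ l → (Λ.part l = fun _ => 0) ∧ Λ.isStrict l = false)

/-- `t` is a standard tableau of shape `Λ` with entries `1,…,n`: a bijection
from the boxes onto `{1,…,n}`, increasing along rows and columns of each
component, normalized to `0` outside the diagram. -/
def IsStd (Λ : MultiShape) (n : ℕ) (t : ℕ × ℕ × ℕ → ℕ) : Prop :=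
  Set.BijOn t Λ.cells (Set.Icc 1 n) ∧
  (∀ b ∈ Λ.cells, ∀ b' ∈ Λ.cells,
      b.1 = b'.1 → b.2.1 = b'.2.1 → b.2.2 < b'.2.2 → t b < t b') ∧
  (∀ b ∈ Λ.cells, ∀ b' ∈ Λ.cells,
      b.1 = b'.1 → b.2.2 = b'.2.2 → b.2.1 < b'.2.1 → t b < t b') ∧
  (∀ b, b ∉ Λ.cells → t b = 0)

/-- The simple transposition `s_k = (k, k+1)` acting on entries. -/
def sw (k : ℕ) : Equiv.Perm ℕ := Equiv.swap k (k + 1)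

/-- The permutation `s_{i_k} ⋯ s_{i_1}` associated to the word `w = [i_1,…,i_k]`
(the first letter acts first). -/
def wordPerm (w : List ℕ) : Equiv.Perm ℕ :=
  w.foldl (fun σ k => sw k * σ) 1

end MultiShape

/-!
Let `g(ξ)` be the number of standard shifted tableaux of a shape `ξ` of size `n`. The box holding
`n` is an outer corner, which gives the branching rule `g(ξ) = ∑ₛ g(ξ - s)` over the removable
rows `s`. Weight an addable box in row `r` by `w(ξ, r) = 1` if it starts a new row and `2`
otherwise, so that `2 ^ (n + 1 - ℓ(ξ + r)) = 2 ^ (n - ℓ(ξ)) * w(ξ, r)`. The weighted up and down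
operators of the shifted Young graph satisfy `D U - U D = 1`: adding `r` and removing `s ≠ r`
commute, and the diagonal terms reduce to `∑ᵣ w(ξ, r) = ∑ₛ w(ξ - s, s) + 1`. Applied to `g` this
gives `∑ᵣ w(ξ, r) g(ξ + r) = (n + 1) g(ξ)` by induction on `n`. Expanding one factor `g(ξ)` in
each term of `T(n + 1) = ∑ 2 ^ (n + 1 - ℓ(ξ)) g(ξ)²` by the branching rule and regrouping by
`ξ - s` then yields `T(n + 1) = (n + 1) T(n)`.
-/

theorem Finset.sum_update_add_of_mem {ι M : Type*} [AddCommMonoid M] [DecidableEq ι]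
    {s : Finset ι} {i : ι} (hi : i ∈ s) (f : ι → M) (v : M) :
    ∑ x ∈ s, Function.update f i v x + f i = ∑ x ∈ s, f x + v := by
  rw [Finset.sum_update_of_mem hi, Finset.sum_eq_add_sum_sdiff_singleton_of_mem hi]
  abel

theorem Finset.sum_sum_add_sum_diag_eq {ι M : Type*} [AddCommMonoid M] [DecidableEq ι]
    (u : Finset ι) {F G : ι → ι → M} (h : ∀ r ∈ u, ∀ s ∈ u, r ≠ s → F r s = G s r) :
    ∑ r ∈ u, ∑ s ∈ u, F r s + ∑ r ∈ u, G r r = ∑ s ∈ u, ∑ r ∈ u, G s r + ∑ r ∈ u, F r r := by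
  rw [Finset.sum_comm (s := u) (f := G), ← Finset.sum_add_distrib, ← Finset.sum_add_distrib]
  refine Finset.sum_congr rfl fun r hr => ?_
  rw [← Finset.add_sum_erase u _ hr, ← Finset.add_sum_erase u (G · r) hr,
    Finset.sum_congr rfl fun s hs =>
      h r hr s (Finset.mem_erase.1 hs).2 (Finset.mem_erase.1 hs).1.symm]
  abel

theorem Real.rpow_sub_div_two_mul_sq {x : ℝ} (hx : 0 ≤ x) {m k : ℕ} (hkm : k ≤ m) (c : ℝ) :
    (x ^ (((m : ℝ) - k) / 2) * c) ^ 2 = x ^ (m - k) * c ^ 2 := by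
  rw [mul_pow, ← Real.rpow_mul_natCast hx, ← Real.rpow_natCast x (m - k), Nat.cast_sub hkm]
  norm_num

namespace MultiShape

open Function

variable {Λ Λ' : MultiShape} {n : ℕ} {t : ℕ × ℕ × ℕ → ℕ} {b : ℕ × ℕ × ℕ} {p : ℕ → ℕ}

theorem isStrictPartFun_iff : IsStrictPartFun p ↔ ∀ i, p (i + 1) = 0 ∨ p (i + 1) < p i := by
  refine ⟨fun hp i => ?_, fun hp => ⟨antitone_nat_of_succ_le fun i => ?_, fun i hi => ?_⟩⟩
  · by_cases h : p (i + 1) = 0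
    exacts [Or.inl h, Or.inr (hp.2 i h)]
  · rcases hp i with h | h <;> omega
  · exact (hp i).resolve_left hi

theorem IsStrictPartFun.add_le (hp : IsStrictPartFun p) {i d : ℕ} (h : p (i + d) ≠ 0) :
    p (i + d) + d ≤ p i := by
  induction d with
  | zero => simp
  | succ d ih =>
    rw [← add_assoc i] at h ⊢
    have := hp.2 (i + d) h
    have := ih (by omega)
    omega

def IsOuterCorner (Λ : MultiShape) (b : ℕ × ℕ × ℕ) : Prop :=
  b ∈ Λ.cells ∧ ∀ b' ∈ Λ.cells, b'.1 = b.1 →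
    (b'.2.1 = b.2.1 → b'.2.2 ≤ b.2.2) ∧ (b'.2.2 = b.2.2 → b'.2.1 ≤ b.2.1)

instance finite_std (Λ : MultiShape) (n : ℕ) : Finite {t // IsStd Λ n t} := by
  by_cases hne : ∃ t, IsStd Λ n t
  · obtain ⟨t₀, ht₀⟩ := hne
    have : Finite Λ.cells :=
      (Set.Finite.of_injOn ht₀.1.mapsTo ht₀.1.injOn (Set.finite_Icc 1 n)).to_subtype
    refine Finite.of_injective
      (fun t : {t // IsStd Λ n t} => fun c : Λ.cells => (⟨t.1 c, t.2.1.mapsTo c.2⟩ : Set.Icc 1 n))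
      fun t₁ t₂ he => Subtype.ext (funext fun b => ?_)
    by_cases hb : b ∈ Λ.cells
    · simpa using congrFun he ⟨b, hb⟩
    · rw [t₁.2.2.2.2 b hb, t₂.2.2.2.2 b hb]
  · have : IsEmpty {t // IsStd Λ n t} := ⟨fun t => hne ⟨t.1, t.2⟩⟩
    infer_instance

theorem card_std_zero (h : Λ.cells = ∅) : Nat.card {t // IsStd Λ 0 t} = 1 := by
  have hstd : ∀ t, IsStd Λ 0 t ↔ t = 0 := fun t => by
    refine ⟨fun ht => funext fun b => ht.2.2.2 b (h ▸ Set.notMem_empty b), ?_⟩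
    rintro rfl
    refine ⟨?_, ?_, ?_, fun _ _ => rfl⟩ <;> simp [h]
  rw [Nat.card_congr (Equiv.subtypeEquivRight hstd), Nat.card_unique]

theorem IsStd.isOuterCorner (ht : IsStd Λ n t) (hb : b ∈ Λ.cells) (hn : t b = n) :
    Λ.IsOuterCorner b := by
  refine ⟨hb, fun b' hb' h₁ => ⟨fun h₂ => ?_, fun h₂ => ?_⟩⟩ <;> by_contra! h₃
  · have := ht.2.1 b hb b' hb' h₁.symm h₂.symm h₃
    have := (ht.1.mapsTo hb').2
    omega
  · have := ht.2.2.1 b hb b' hb' h₁.symm h₂.symm h₃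
    have := (ht.1.mapsTo hb').2
    omega

theorem IsStd.update_zero (ht : IsStd Λ (n + 1) t) (hb : b ∈ Λ.cells) (hn : t b = n + 1)
    (hcells : Λ'.cells = Λ.cells \ {b}) : IsStd Λ' n (update t b 0) := by
  have heq : Set.EqOn t (update t b 0) Λ'.cells := fun c hc => by
    rw [hcells] at hc
    exact (update_of_ne hc.2 _ _).symm
  have hIcc : Set.Icc 1 (n + 1) \ {n + 1} = Set.Icc 1 n := by
    ext m; simp only [Set.mem_sdiff, Set.mem_Icc, Set.mem_singleton_iff]; omega
  refine ⟨?_, fun c hc c' hc' h₁ h₂ h₃ => ?_, fun c hc c' hc' h₁ h₂ h₃ => ?_, fun c hc => ?_⟩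
  · have := ht.1.sdiff_singleton hb
    rw [hn, hIcc, ← hcells] at this
    exact this.congr heq
  · rw [← heq hc, ← heq hc']
    exact ht.2.1 c (hcells ▸ hc).1 c' (hcells ▸ hc').1 h₁ h₂ h₃
  · rw [← heq hc, ← heq hc']
    exact ht.2.2.1 c (hcells ▸ hc).1 c' (hcells ▸ hc').1 h₁ h₂ h₃
  · rcases eq_or_ne c b with rfl | hcb
    · exact update_self ..
    · rw [update_of_ne hcb]
      exact ht.2.2.2 c fun h => hc (hcells ▸ ⟨h, hcb⟩)

theorem IsStd.update_of_isOuterCorner (ht : IsStd Λ' n t) (hb : Λ.IsOuterCorner b)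
    (hcells : Λ'.cells = Λ.cells \ {b}) : IsStd Λ (n + 1) (update t b (n + 1)) := by
  have hb' : b ∉ Λ'.cells := by simp [hcells]
  have heq : Set.EqOn t (update t b (n + 1)) Λ'.cells := fun c hc =>
    (update_of_ne (ne_of_mem_of_not_mem hc hb') _ _).symm
  have hlt : ∀ c ∈ Λ'.cells, update t b (n + 1) c < n + 1 := fun c hc => by
    rw [← heq hc]; exact Nat.lt_succ_of_le (ht.1.mapsTo hc).2
  have hmem : ∀ c ∈ Λ.cells, c ≠ b → c ∈ Λ'.cells := fun c hc hcb => hcells ▸ ⟨hc, hcb⟩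
  refine ⟨?_, fun c hc c' hc' h₁ h₂ h₃ => ?_, fun c hc c' hc' h₁ h₂ h₃ => ?_, fun c hc => ?_⟩
  · have hIcc : insert (n + 1) (Set.Icc 1 n) = Set.Icc 1 (n + 1) := by
      ext m; simp only [Set.mem_insert_iff, Set.mem_Icc]; omega
    have := (ht.1.congr heq).insert (a := b) (by simp)
    rwa [update_self, hcells, Set.insert_sdiff_singleton, Set.insert_eq_of_mem hb.1, hIcc] at this
  · rcases eq_or_ne c' b with rfl | hc'b
    · rw [update_self]
      exact hlt c (hmem c hc (by rintro rfl; omega))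
    · have hcb : c ≠ b := by
        rintro rfl
        have := (hb.2 c' hc' h₁.symm).1 h₂.symm
        omega
      rw [← heq (hmem c hc hcb), ← heq (hmem c' hc' hc'b)]
      exact ht.2.1 c (hmem c hc hcb) c' (hmem c' hc' hc'b) h₁ h₂ h₃
  · rcases eq_or_ne c' b with rfl | hc'b
    · rw [update_self]
      exact hlt c (hmem c hc (by rintro rfl; omega))
    · have hcb : c ≠ b := by
        rintro rfl
        have := (hb.2 c' hc' h₁.symm).2 h₂.symm
        omega
      rw [← heq (hmem c hc hcb), ← heq (hmem c' hc' hc'b)]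
      exact ht.2.2.1 c (hmem c hc hcb) c' (hmem c' hc' hc'b) h₁ h₂ h₃
  · have hcb : c ≠ b := fun h => hc (h ▸ hb.1)
    rw [update_of_ne hcb]
    exact ht.2.2.2 c fun h => hc (hcells ▸ h).1

def stdEquivOfOuterCorner (hb : Λ.IsOuterCorner b) (hcells : Λ'.cells = Λ.cells \ {b}) :
    {t // IsStd Λ (n + 1) t ∧ t b = n + 1} ≃ {t // IsStd Λ' n t} where
  toFun t := ⟨update t.1 b 0, t.2.1.update_zero hb.1 t.2.2 hcells⟩
  invFun t := ⟨update t.1 b (n + 1), t.2.update_of_isOuterCorner hb hcells, update_self ..⟩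
  left_inv t := by
    ext1
    simp only [update_idem]
    exact update_eq_self_iff.2 t.2.2.symm
  right_inv t := by
    ext1
    simp only [update_idem]
    exact update_eq_self_iff.2 (t.2.2.2.2 b (by simp [hcells])).symm

theorem card_std_eq_sum_outerCorner (C : Finset (ℕ × ℕ × ℕ)) (hC : ∀ b ∈ C, b ∈ Λ.cells)
    (hcorner : ∀ b, Λ.IsOuterCorner b → b ∈ C) :
    Nat.card {t // IsStd Λ (n + 1) t} =
      ∑ b ∈ C, Nat.card {t // IsStd Λ (n + 1) t ∧ t b = n + 1} := by
  have hmax : ∀ t : {t // IsStd Λ (n + 1) t}, ∃ b ∈ Λ.cells, t.1 b = n + 1 := fun t =>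
    t.2.1.surjOn (Set.right_mem_Icc.2 (by omega))
  choose pos hpos hval using hmax
  let f : {t // IsStd Λ (n + 1) t} → C := fun t =>
    ⟨pos t, hcorner _ (t.2.isOuterCorner (hpos t) (hval t))⟩
  have hf : ∀ t c, f t = c ↔ t.1 c = n + 1 := fun t c => by
    refine ⟨fun h => h ▸ hval t, fun h => Subtype.ext ?_⟩
    exact t.2.1.injOn (hpos t) (hC c c.2) ((hval t).trans h.symm)
  rw [← Nat.card_congr (Equiv.sigmaFiberEquiv f), Nat.card_sigma,
    ← Finset.sum_coe_sort C]
  refine Finset.sum_congr rfl fun c _ => Nat.card_congr ?_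
  exact (Equiv.subtypeEquivRight (hf · c)).trans
    (Equiv.subtypeSubtypeEquivSubtypeInter (IsStd Λ (n + 1)) (· c = n + 1))

end MultiShape

namespace Shifted

open MultiShape Finset Function

variable {p : ℕ → ℕ} {n r s : ℕ}

structure IsStrictPartition (p : ℕ → ℕ) (n : ℕ) : Prop where
  isStrictPartFun : IsStrictPartFun p
  sum_range : ∑ i ∈ range n, p i = n
  eq_zero_of_le ⦃j : ℕ⦄ : n ≤ j → p j = 0

def Addable (p : ℕ → ℕ) (r : ℕ) : Prop := r = 0 ∨ p r + 1 < p (r - 1)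

def Removable (p : ℕ → ℕ) (r : ℕ) : Prop :=
  p r ≠ 0 ∧ (p (r + 1) = 0 ∨ p (r + 1) + 1 < p r)

instance (p : ℕ → ℕ) : DecidablePred (Addable p) := fun _ =>
  inferInstanceAs (Decidable (_ ∨ _))

instance (p : ℕ → ℕ) : DecidablePred (Removable p) := fun _ =>
  inferInstanceAs (Decidable (_ ∧ _))

def addBox (p : ℕ → ℕ) (r : ℕ) : ℕ → ℕ := update p r (p r + 1)

def removeBox (p : ℕ → ℕ) (r : ℕ) : ℕ → ℕ := update p r (p r - 1)

namespace IsStrictPartition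

theorem lt_of_ne_zero (h : IsStrictPartition p n) {j : ℕ} (hj : p j ≠ 0) : j < n := by
  by_contra! hc
  exact hj (h.eq_zero_of_le hc)

theorem apply_le (h : IsStrictPartition p n) (i : ℕ) : p i ≤ n := by
  by_cases hi : p i = 0
  · omega
  · exact h.sum_range ▸
      single_le_sum (fun j _ => Nat.zero_le (p j)) (mem_range.2 (h.lt_of_ne_zero hi))

theorem apply_succ_eq_zero (h : IsStrictPartition p (n + 2)) : p (n + 1) = 0 := by
  by_contra hc
  have h₀ := h.isStrictPartFun.add_le (i := 0) (d := n + 1) (by simpa using hc)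
  have h₁ := h.isStrictPartFun.add_le (i := 1) (d := n) (by rwa [add_comm])
  have h₂ : p 0 + p 1 ≤ ∑ i ∈ range (n + 2), p i := by
    simpa using sum_le_sum_of_subset (f := p) (show {0, 1} ⊆ range (n + 2) by
      intro i; simp only [mem_insert, mem_singleton, mem_range]; omega)
  simp only [zero_add] at h₀
  rw [add_comm 1 n] at h₁
  have := h.sum_range
  omega

theorem le_of_addable (h : IsStrictPartition p n) (hr : Addable p r) : r ≤ n := by
  rcases hr with rfl | hr
  · omega
  · have := h.lt_of_ne_zero (j := r - 1) (by omega)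
    omega

end IsStrictPartition

@[simp] theorem removeBox_addBox (p : ℕ → ℕ) (r : ℕ) : removeBox (addBox p r) r = p := by
  simp [removeBox, addBox]

theorem addBox_removeBox (h : p r ≠ 0) : addBox (removeBox p r) r = p := by
  simp only [addBox, removeBox, update_self, update_idem]
  exact update_eq_self_iff.2 (by omega)

theorem removeBox_addBox_comm (h : r ≠ s) :
    removeBox (addBox p r) s = addBox (removeBox p s) r := by
  simp only [removeBox, addBox, update_of_ne h, update_of_ne h.symm]
  exact update_comm h _ _ p

theorem isStrictPartFun_addBox (hp : IsStrictPartFun p) (hr : Addable p r) :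
    IsStrictPartFun (addBox p r) := by
  rw [isStrictPartFun_iff] at hp ⊢
  intro i
  have := hp i
  rcases eq_or_ne (i + 1) r with rfl | h
  · have : p (i + 1) + 1 < p i := by simpa [Addable] using hr
    simp [addBox]
    omega
  · simp only [addBox, update_apply, if_neg h]
    split_ifs <;> subst_vars <;> omega

theorem isStrictPartFun_removeBox (hp : IsStrictPartFun p) (hr : Removable p r) :
    IsStrictPartFun (removeBox p r) := by
  rw [isStrictPartFun_iff] at hp ⊢
  intro i
  have := hp i
  have := hr.2
  simp only [removeBox, update_apply]
  split_ifs <;> subst_vars <;> omega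

theorem removable_addBox (hp : IsStrictPartFun p) :
    Removable (addBox p r) r := by
  have := (isStrictPartFun_iff.1 hp) r
  simp [Removable, addBox]
  omega

theorem addable_removeBox (hp : IsStrictPartFun p) (hr : Removable p r) :
    Addable (removeBox p r) r := by
  rcases Nat.eq_zero_or_pos r with rfl | _
  · exact Or.inl rfl
  · obtain ⟨i, rfl⟩ : ∃ i, r = i + 1 := ⟨r - 1, by omega⟩
    have := (isStrictPartFun_iff.1 hp) i
    have := hr.1
    simp [Addable, removeBox]
    omega

theorem addable_and_removable_addBox_iff (h : r ≠ s) :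
    Addable p r ∧ Removable (addBox p r) s ↔ Removable p s ∧ Addable (removeBox p s) r := by
  rcases eq_or_ne r (s + 1) with rfl | h'
  · simp [Addable, Removable, addBox, removeBox]
    omega
  · have h'' : r = 0 ∨ r - 1 ≠ s := by omega
    simp only [Addable, Removable, addBox, removeBox, update_of_ne h.symm, update_of_ne h,
      update_of_ne h'.symm]
    rcases h'' with rfl | h''
    · simp
    · simp only [update_of_ne h'']
      tauto

theorem isStrictPartition_addBox (h : IsStrictPartition p n) (hr : Addable p r) :
    IsStrictPartition (addBox p r) (n + 1) := by
  have hrn := h.le_of_addable hr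
  refine ⟨isStrictPartFun_addBox h.isStrictPartFun hr, ?_, fun j hj => ?_⟩
  · have := sum_update_add_of_mem (mem_range.2 (by omega : r < n + 1)) p (p r + 1)
    rw [sum_range_succ p, h.eq_zero_of_le le_rfl, h.sum_range] at this
    rw [addBox]
    omega
  · rw [addBox, update_of_ne (by omega)]
    exact h.eq_zero_of_le (by omega)

theorem isStrictPartition_removeBox (h : IsStrictPartition p (n + 1)) (hr : Removable p r) :
    IsStrictPartition (removeBox p r) n := by
  have hrn := h.lt_of_ne_zero hr.1
  have hzero : ∀ j, n ≤ j → removeBox p r j = 0 := fun j hj => by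
    rcases n with _ | n
    · have := h.sum_range
      simp only [zero_add, sum_range_one] at this
      rcases j with _ | j
      · simp [removeBox, show r = 0 by omega, this]
      · rw [removeBox, update_of_ne (by omega)]
        exact h.eq_zero_of_le (by omega)
    · have : p j = 0 := Nat.eq_zero_of_le_zero (h.apply_succ_eq_zero ▸ h.isStrictPartFun.1 hj)
      simp only [removeBox, update_apply]
      split_ifs <;> subst_vars <;> omega
  refine ⟨isStrictPartFun_removeBox h.isStrictPartFun hr, ?_, hzero⟩
  have hsum := sum_update_add_of_mem (mem_range.2 hrn) p (p r - 1)
  rw [h.sum_range, sum_range_succ] at hsum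
  have hlast := hzero n le_rfl
  have := hr.1
  simp only [removeBox] at hlast ⊢
  omega

def shiftedShape (p : ℕ → ℕ) : MultiShape := ⟨1, fun _ => true, fun _ => p⟩

noncomputable def stdCount (p : ℕ → ℕ) (n : ℕ) : ℕ := Nat.card {t // IsStd (shiftedShape p) n t}

def corner (p : ℕ → ℕ) (r : ℕ) : ℕ × ℕ × ℕ := (0, r, r + p r - 1)

theorem mem_cells {b : ℕ × ℕ × ℕ} :
    b ∈ (shiftedShape p).cells ↔ b.1 = 0 ∧ b.2.1 ≤ b.2.2 ∧ b.2.2 < b.2.1 + p b.2.1 := by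
  simp [cells, shiftedShape]

theorem corner_mem_cells (h : p r ≠ 0) : corner p r ∈ (shiftedShape p).cells := by
  simp [mem_cells, corner]
  omega

theorem cells_removeBox (h : p r ≠ 0) :
    (shiftedShape (removeBox p r)).cells = (shiftedShape p).cells \ {corner p r} := by
  ext ⟨l, i, j⟩
  simp only [Set.mem_sdiff, mem_cells, Set.mem_singleton_iff, corner, Prod.mk.injEq,
    removeBox, update_apply]
  split_ifs with hi
  · subst hi
    omega
  · tauto

theorem isOuterCorner_iff (hp : IsStrictPartFun p) {b : ℕ × ℕ × ℕ} :
    (shiftedShape p).IsOuterCorner b ↔ Removable p b.2.1 ∧ b = corner p b.2.1 := by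
  obtain ⟨l, i, j⟩ := b
  simp only [IsOuterCorner, mem_cells, corner, Prod.mk.injEq]
  constructor
  · rintro ⟨⟨rfl, hij, hj⟩, hmax⟩
    have hend :=
      (hmax (0, i, i + p i - 1) ⟨rfl, by simp only; omega, by simp only; omega⟩ rfl).1 rfl
    simp only at hend
    refine ⟨⟨by omega, ?_⟩, by simp; omega⟩
    by_contra! hc
    have := hp.2 i hc.1
    have := (hmax (0, i + 1, j) ⟨rfl, by simp only; omega, by simp only; omega⟩ rfl).2 rfl
    simp at this
  · rintro ⟨⟨hr, hr'⟩, rfl, -, rfl⟩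
    refine ⟨⟨rfl, by omega, by omega⟩, ?_⟩
    rintro ⟨l', i', j'⟩ ⟨-, hi'j', hj'⟩ -
    simp only at hi'j' hj' ⊢
    refine ⟨fun hi' => by subst hi'; omega, fun hj => ?_⟩
    subst hj
    by_contra! hc
    obtain ⟨d, rfl⟩ : ∃ d, i' = i + 1 + d := ⟨i' - (i + 1), by omega⟩
    have hne : p (i + 1 + d) ≠ 0 := by omega
    have := hp.add_le hne
    rcases hr' with h0 | h0
    · exact hne (Nat.eq_zero_of_le_zero (h0 ▸ hp.1 (by omega)))
    · omega

theorem stdCount_zero : stdCount (fun _ => 0) 0 = 1 :=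
  card_std_zero (Set.eq_empty_of_forall_notMem fun b hb => by simp [mem_cells] at hb; omega)

theorem stdCount_succ (h : IsStrictPartition p (n + 1)) {N : ℕ} (hN : n + 1 ≤ N) :
    stdCount p (n + 1) =
      ∑ r ∈ range N, if Removable p r then stdCount (removeBox p r) n else 0 := by
  have hcorner := fun b => isOuterCorner_iff h.isStrictPartFun (b := b)
  rw [stdCount, card_std_eq_sum_outerCorner (((range N).filter (Removable p)).image (corner p)),
    sum_image, sum_filter]
  · refine sum_congr rfl fun r _ => ?_
    split_ifs with hr
    · exact Nat.card_congr (stdEquivOfOuterCorner ((hcorner _).2 ⟨hr, rfl⟩) (cells_removeBox hr.1))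
    · rfl
  · intro r _ s _ hrs
    exact (Prod.ext_iff.1 (Prod.ext_iff.1 hrs).2).1
  · intro b hb
    obtain ⟨r, hr, rfl⟩ := mem_image.1 hb
    exact corner_mem_cells (mem_filter.1 hr).2.1
  · intro b hb
    obtain ⟨hr, hb⟩ := (hcorner b).1 hb
    have := h.lt_of_ne_zero hr.1
    exact hb ▸ mem_image_of_mem _ (mem_filter.2 ⟨mem_range.2 (by omega), hr⟩)

def addWeight (p : ℕ → ℕ) (r : ℕ) : ℕ := if p r = 0 then 1 else 2

def removeWeight (p : ℕ → ℕ) (r : ℕ) : ℕ := if p r = 1 then 1 else 2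

theorem addWeight_removeBox_self (h : p r ≠ 0) :
    addWeight (removeBox p r) r = removeWeight p r := by
  simp only [addWeight, removeWeight, removeBox, update_self]
  split_ifs <;> omega

theorem addWeight_removeBox_of_ne (h : r ≠ s) : addWeight (removeBox p s) r = addWeight p r := by
  simp [addWeight, removeBox, update_of_ne h]

theorem sum_addWeight_eq_sum_removeWeight_add_one (h : IsStrictPartition p n) {N : ℕ}
    (hN : n < N) :
    ∑ r ∈ range N, (if Addable p r then addWeight p r else 0) =
      ∑ r ∈ range N, (if Removable p r then removeWeight p r else 0) + 1 := by
  obtain ⟨M, rfl⟩ : ∃ M, N = M + 1 := ⟨N - 1, by omega⟩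
  set c : ℕ → ℕ := fun r => if p r = 0 then 1 else 0 with hc
  -- telescoping along the rows, `c` marking the empty ones
  have hstep : ∀ r, (if Removable p r then removeWeight p r else 0) + c r =
      (if Addable p (r + 1) then addWeight p (r + 1) else 0) + c (r + 1) := fun r => by
    have := (isStrictPartFun_iff.1 h.isStrictPartFun) r
    simp only [Removable, Addable, removeWeight, addWeight, hc, Nat.add_sub_cancel,
      Nat.add_one_ne_zero, false_or]
    by_cases h₀ : p r = 0 <;> by_cases h₁ : p (r + 1) = 0 <;> by_cases h₂ : p (r + 1) + 1 < p r <;>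
      by_cases h₃ : p r = 1 <;> simp [h₀, h₁, h₂, h₃] <;> omega
  have hsum := sum_congr rfl fun r (_ : r ∈ range M) => hstep r
  rw [sum_add_distrib, sum_add_distrib] at hsum
  have hc_shift := (sum_range_succ c M).symm.trans (sum_range_succ' c M)
  have hcM : c M = 1 := by simp [hc, h.eq_zero_of_le (by omega : n ≤ M)]
  have hc0 : c 0 ≤ 1 := by simp only [hc]; split_ifs <;> omega
  have hA0 : (if Addable p 0 then addWeight p 0 else 0) + c 0 = 2 := by
    simp only [Addable, addWeight, hc, true_or, if_true]
    split_ifs <;> omega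
  have hRM : (if Removable p M then removeWeight p M else 0) = 0 :=
    if_neg fun hr => hr.1 (h.eq_zero_of_le (by omega))
  rw [sum_range_succ', sum_range_succ, hRM]
  omega

/-- The weighted up operator applied to `stdCount · k`; every `N` beyond the last addable row
gives the same value. -/
noncomputable def upSum (p : ℕ → ℕ) (k N : ℕ) : ℕ :=
  ∑ r ∈ range N, if Addable p r then addWeight p r * stdCount (addBox p r) k else 0

theorem upSum_succ_of_sum_removeBox (h : IsStrictPartition p n) {N : ℕ} (hN : n < N)
    (hdown : ∑ s ∈ range N, (if Removable p s then upSum (removeBox p s) n N else 0) =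
      n * stdCount p n) :
    upSum p (n + 1) N = (n + 1) * stdCount p n := by
  set X := stdCount p n
  let F r s := if Addable p r ∧ Removable (addBox p r) s then
    addWeight p r * stdCount (removeBox (addBox p r) s) n else 0
  let G s r := if Removable p s ∧ Addable (removeBox p s) r then
    addWeight (removeBox p s) r * stdCount (addBox (removeBox p s) r) n else 0
  have hF : upSum p (n + 1) N = ∑ r ∈ range N, ∑ s ∈ range N, F r s := sum_congr rfl fun r _ => by
    by_cases hr : Addable p r
    · rw [if_pos hr, stdCount_succ (isStrictPartition_addBox h hr) hN, mul_sum]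
      refine sum_congr rfl fun s _ => ?_
      by_cases hs : Removable (addBox p r) s <;> simp [F, hr, hs]
    · simp [F, hr]
  have hG : ∑ s ∈ range N, ∑ r ∈ range N, G s r = n * X := hdown ▸ sum_congr rfl fun s _ => by
    by_cases hs : Removable p s <;> simp [G, hs, upSum]
  have hFdiag : ∑ r ∈ range N, F r r =
      (∑ r ∈ range N, if Addable p r then addWeight p r else 0) * X := by
    rw [sum_mul]
    refine sum_congr rfl fun r _ => ?_
    by_cases hr : Addable p r <;> simp [F, hr, removable_addBox h.isStrictPartFun, X]
  have hGdiag : ∑ r ∈ range N, G r r =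
      (∑ r ∈ range N, if Removable p r then removeWeight p r else 0) * X := by
    rw [sum_mul]
    refine sum_congr rfl fun r _ => ?_
    by_cases hr : Removable p r
    · simp [G, hr, addable_removeBox h.isStrictPartFun hr, addBox_removeBox hr.1,
        addWeight_removeBox_self hr.1, X]
    · simp [G, hr]
  have hswap := sum_sum_add_sum_diag_eq (range N) (F := F) (G := G) fun r _ s _ hrs => by
    simp only [F, G]
    rw [removeBox_addBox_comm hrs, addWeight_removeBox_of_ne hrs]
    exact if_congr (addable_and_removable_addBox_iff hrs) rfl rfl
  rw [hFdiag, hGdiag, hG, sum_addWeight_eq_sum_removeWeight_add_one h hN] at hswap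
  rw [hF]
  linarith

theorem upSum_succ (h : IsStrictPartition p n) {N : ℕ} (hN : n < N) :
    upSum p (n + 1) N = (n + 1) * stdCount p n := by
  induction n generalizing p with
  | zero =>
    refine upSum_succ_of_sum_removeBox h hN ?_
    rw [zero_mul]
    exact sum_eq_zero fun s _ => if_neg fun hs => hs.1 (h.eq_zero_of_le (Nat.zero_le s))
  | succ n ih =>
    refine upSum_succ_of_sum_removeBox h hN ?_
    rw [stdCount_succ h hN.le, mul_sum]
    refine sum_congr rfl fun s _ => ?_
    split_ifs with hs
    · exact ih (isStrictPartition_removeBox h hs) (by omega)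
    · rfl

def extendByZero {n : ℕ} (q : Fin n → Fin (n + 1)) : ℕ → ℕ :=
  fun i => if h : i < n then (q ⟨i, h⟩ : ℕ) else 0

theorem extendByZero_injective : Injective (extendByZero (n := n)) := fun q q' h =>
  funext fun i => Fin.ext <| by simpa [extendByZero] using congrFun h i

theorem extendByZero_val (q : Fin n → Fin (n + 1)) (i : Fin n) : extendByZero q i = q i := by
  simp [extendByZero]

theorem isStrictPartition_extendByZero_iff (q : Fin n → Fin (n + 1)) :
    IsStrictPartition (extendByZero q) n ↔
      IsStrictPartFun (extendByZero q) ∧ ∑ i : Fin n, (q i : ℕ) = n := by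
  have hsum : ∑ i ∈ range n, extendByZero q i = ∑ i : Fin n, (q i : ℕ) := by
    rw [← Fin.sum_univ_eq_sum_range]
    simp only [extendByZero_val]
  rw [← hsum]
  exact ⟨fun h => ⟨h.isStrictPartFun, h.sum_range⟩,
    fun h => ⟨h.1, h.2, fun j hj => by simp [extendByZero, not_lt.2 hj]⟩⟩

open Classical in
noncomputable def strictPartitions (n : ℕ) : Finset (ℕ → ℕ) :=
  ((univ : Finset (Fin n → Fin (n + 1))).filter
    fun q => IsStrictPartition (extendByZero q) n).image extendByZero

theorem mem_strictPartitions : p ∈ strictPartitions n ↔ IsStrictPartition p n := by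
  classical
  simp only [strictPartitions, mem_image, mem_filter, mem_univ, true_and]
  refine ⟨fun ⟨q, hq, hqp⟩ => hqp ▸ hq, fun h => ?_⟩
  let q : Fin n → Fin (n + 1) := fun i => ⟨p i, Nat.lt_succ_of_le (h.apply_le i)⟩
  have hq : extendByZero q = p := funext fun i => by
    by_cases hi : i < n
    · simp [q, extendByZero, hi]
    · simp [extendByZero, hi, h.eq_zero_of_le (not_lt.1 hi)]
  exact ⟨q, by rwa [hq], hq⟩

def numParts (p : ℕ → ℕ) (n : ℕ) : ℕ := ((range n).filter (p · ≠ 0)).card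

theorem numParts_le (p : ℕ → ℕ) (n : ℕ) : numParts p n ≤ n :=
  (card_filter_le _ _).trans (card_range n).le

theorem numParts_extendByZero (q : Fin n → Fin (n + 1)) :
    numParts (extendByZero q) n = (univ.filter fun i : Fin n => (q i : ℕ) ≠ 0).card := by
  rw [numParts, card_filter, card_filter, ← Fin.sum_univ_eq_sum_range]
  simp only [extendByZero_val]

theorem numParts_addBox (h : IsStrictPartition p n) (hr : Addable p r) :
    numParts (addBox p r) (n + 1) = numParts p n + if p r = 0 then 1 else 0 := by
  have hrn := h.le_of_addable hr
  have : (range (n + 1)).filter (addBox p r · ≠ 0) = insert r ((range n).filter (p · ≠ 0)) := by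
    ext i
    simp only [mem_filter, mem_range, mem_insert, addBox, update_apply]
    split_ifs with hi
    · subst hi; omega
    · have := fun hin : i = n => h.eq_zero_of_le hin.ge
      omega
  rw [numParts, numParts, this, card_insert_eq_ite]
  rcases eq_or_ne (p r) 0 with h0 | h0
  · simp [h0]
  · simp [h0, h.lt_of_ne_zero h0]

theorem two_pow_numParts_addBox (h : IsStrictPartition p n) (hr : Addable p r) :
    2 ^ (n + 1 - numParts (addBox p r) (n + 1)) = 2 ^ (n - numParts p n) * addWeight p r := by
  have := numParts_le p n
  rw [numParts_addBox h hr, addWeight]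
  split_ifs
  · rw [mul_one]; congr 1; omega
  · rw [← pow_succ]; congr 1; omega

noncomputable def weightedSum (n : ℕ) : ℕ :=
  ∑ p ∈ strictPartitions n, 2 ^ (n - numParts p n) * stdCount p n ^ 2

open Classical in
theorem weightedSum_eq_sum_extendByZero (n : ℕ) :
    weightedSum n = ∑ q : Fin n → Fin (n + 1), if IsStrictPartition (extendByZero q) n then
      2 ^ (n - numParts (extendByZero q) n) * stdCount (extendByZero q) n ^ 2 else 0 := by
  rw [weightedSum, strictPartitions, sum_image extendByZero_injective.injOn, sum_filter]

theorem sum_removable_eq_sum_addable (n : ℕ) (A : (ℕ → ℕ) → ℕ → ℕ) :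
    ∑ p ∈ strictPartitions (n + 1), ∑ r ∈ range (n + 1), (if Removable p r then A p r else 0) =
      ∑ μ ∈ strictPartitions n, ∑ r ∈ range (n + 1),
        (if Addable μ r then A (addBox μ r) r else 0) := by
  rw [← sum_product', ← sum_product',
    ← sum_filter (fun z : (ℕ → ℕ) × ℕ => Removable z.1 z.2) (fun z => A z.1 z.2),
    ← sum_filter (fun z : (ℕ → ℕ) × ℕ => Addable z.1 z.2) (fun z => A (addBox z.1 z.2) z.2)]
  refine sum_nbij' (fun z => (removeBox z.1 z.2, z.2)) (fun z => (addBox z.1 z.2, z.2))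
    ?_ ?_ ?_ ?_ ?_
  · simp only [mem_filter, mem_product, mem_strictPartitions]
    rintro ⟨p, r⟩ ⟨⟨hp, hr⟩, hrem⟩
    exact ⟨⟨isStrictPartition_removeBox hp hrem, hr⟩, addable_removeBox hp.isStrictPartFun hrem⟩
  · simp only [mem_filter, mem_product, mem_strictPartitions]
    rintro ⟨μ, r⟩ ⟨⟨hμ, hr⟩, hadd⟩
    exact ⟨⟨isStrictPartition_addBox hμ hadd, hr⟩, removable_addBox hμ.isStrictPartFun⟩
  · rintro ⟨p, r⟩ hz
    simp [addBox_removeBox (mem_filter.1 hz).2.1]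
  · rintro ⟨μ, r⟩ -
    simp
  · rintro ⟨p, r⟩ hz
    simp [addBox_removeBox (mem_filter.1 hz).2.1]

theorem weightedSum_succ (n : ℕ) : weightedSum (n + 1) = (n + 1) * weightedSum n := by
  calc weightedSum (n + 1)
      = ∑ p ∈ strictPartitions (n + 1), ∑ r ∈ range (n + 1), if Removable p r then
          2 ^ (n + 1 - numParts p (n + 1)) * stdCount p (n + 1) * stdCount (removeBox p r) n
        else 0 := sum_congr rfl fun p hp => by
        rw [sq, ← mul_assoc]
        nth_rw 2 [stdCount_succ (mem_strictPartitions.1 hp) le_rfl]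
        simp_rw [mul_sum, mul_ite, mul_zero]
    _ = ∑ μ ∈ strictPartitions n, ∑ r ∈ range (n + 1), if Addable μ r then
          2 ^ (n + 1 - numParts (addBox μ r) (n + 1)) * stdCount (addBox μ r) (n + 1) * stdCount μ n
        else 0 := by simp_rw [sum_removable_eq_sum_addable, removeBox_addBox]
    _ = ∑ μ ∈ strictPartitions n, 2 ^ (n - numParts μ n) * stdCount μ n * upSum μ (n + 1) (n + 1) :=
        sum_congr rfl fun μ hμ => by
        rw [upSum, mul_sum]
        refine sum_congr rfl fun r _ => ?_
        split_ifs with hr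
        · rw [two_pow_numParts_addBox (mem_strictPartitions.1 hμ) hr]
          ring
        · rfl
    _ = (n + 1) * weightedSum n := by
        rw [weightedSum, mul_sum]
        refine sum_congr rfl fun μ hμ => ?_
        rw [upSum_succ (mem_strictPartitions.1 hμ) n.lt_succ_self]
        ring

theorem weightedSum_eq_factorial (n : ℕ) : weightedSum n = n.factorial := by
  induction n with
  | zero =>
    have : strictPartitions 0 = {fun _ => 0} := by
      ext p
      rw [mem_singleton]
      refine mem_strictPartitions.trans
        ⟨fun h => funext fun j => h.eq_zero_of_le (Nat.zero_le j), ?_⟩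
      rintro rfl
      exact ⟨⟨antitone_const, fun _ h => absurd rfl h⟩, rfl, fun _ _ => rfl⟩
    simp [weightedSum, this, stdCount_zero]
  | succ n ih => rw [weightedSum_succ, ih, Nat.factorial_succ]

end Shifted

open MultiShape Classical in
theorem stmt8_general (t : ℕ) :
    ∑ q : Fin t → Fin (t + 1),
      (if IsStrictPartFun (fun i => if h : i < t then (q ⟨i, h⟩ : ℕ) else 0) ∧
          (∑ i : Fin t, (q i : ℕ)) = t then
        (((2 : ℝ) ^ (((t : ℝ) -
              ((Finset.univ.filter fun i : Fin t => (q i : ℕ) ≠ 0).card : ℝ)) / 2)) *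
          (Nat.card {tab : ℕ × ℕ × ℕ → ℕ //
            IsStd ⟨1, fun _ => true,
              fun _ i => if h : i < t then (q ⟨i, h⟩ : ℕ) else 0⟩ t tab} : ℝ)) ^ 2
      else 0) = t.factorial := by
  rw [← Shifted.weightedSum_eq_factorial, Shifted.weightedSum_eq_sum_extendByZero, Nat.cast_sum]
  refine Finset.sum_congr rfl fun q _ => ?_
  have hq := Shifted.isStrictPartition_extendByZero_iff q
  split_ifs with h₁ h₂ h₂
  · rw [← Shifted.numParts_extendByZero,
      Real.rpow_sub_div_two_mul_sq zero_le_two (Shifted.numParts_le _ _)]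
    push_cast
    rfl
  · exact absurd (hq.2 h₁) h₂
  · exact absurd (hq.1 h₂) h₁
  · exact Nat.cast_zero.symm

open MultiShape Classical in
/-- `Σ_{ξ ∈ P^s_t} (2^{(t-ℓ(ξ))/2} |Std(ξ)|)² = t!`.  Strict partitions of `t`
are encoded as functions `q : Fin t → Fin (t+1)` (the part sizes, with trailing
zeros), `ℓ(ξ)` is the number of nonzero parts, and `|Std(ξ)|` is the number of
standard shifted tableaux of shape `ξ`. -/
theorem stmt8 (t : ℕ) (ht : 0 < t) :
    ∑ q : Fin t → Fin (t + 1),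
      (if IsStrictPartFun (fun i => if h : i < t then (q ⟨i, h⟩ : ℕ) else 0) ∧
          (∑ i : Fin t, (q i : ℕ)) = t then
        (((2 : ℝ) ^ (((t : ℝ) -
              ((Finset.univ.filter fun i : Fin t => (q i : ℕ) ≠ 0).card : ℝ)) / 2)) *
          (Nat.card {tab : ℕ × ℕ × ℕ → ℕ //
            IsStd ⟨1, fun _ => true,
              fun _ i => if h : i < t then (q ⟨i, h⟩ : ℕ) else 0⟩ t tab} : ℝ)) ^ 2
      else 0) = t.factorial :=
  stmt8_general t
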